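/- arXiv:1709.02605 — 3 statements merged into one kernel-verified Lean document; each statement's English description precedes it below -/
import Mathlib

section
/- For any vector u in R^d with Euclidean norm at most M, and any vector c in R^d with all entries positive, the product of u_i^(2 c_i) over i is at most M^(2|c|_1) * |c|_1^(-|c|_1) * product of c_i^(c_i), where |c|_1 denotes the 1-norm of c. -/
open scoped BigOperators

theorem stmt_0 (d : ℕ) (u c : EuclideanSpace ℝ (Fin d)) (M : ℝ)
    (hu : ‖u‖ ≤ M) (hc : ∀ i, 0 < c i) :
    ∏ i, (u i ^ 2) ^ (c i) ≤
      M ^ (2 * ∑ i, c i) * (∑ i, c i) ^ (-(∑ i, c i)) * ∏ i, (c i) ^ (c i) := by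
  have hM : 0 ≤ M := le_trans (norm_nonneg u) hu
  rcases Nat.eq_zero_or_pos d with hd | hd
  · subst hd
    simp [Real.rpow_zero]
  -- C > 0
  set C : ℝ := ∑ i, c i with hC
  have hCpos : 0 < C := Finset.sum_pos (fun i _ => hc i) (by simpa using Finset.univ_nonempty_iff.mpr ⟨⟨0, hd⟩⟩)
  -- sum of squares ≤ M^2
  have hsq : ∑ i, u i ^ 2 ≤ M ^ 2 := by
    have h := EuclideanSpace.norm_eq u
    have h2 : ‖u‖ ^ 2 = ∑ i, u i ^ 2 := by
      rw [h, Real.sq_sqrt (Finset.sum_nonneg fun i _ => by positivity)]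
      simp [sq_abs]
    calc ∑ i, u i ^ 2 = ‖u‖ ^ 2 := h2.symm
      _ ≤ M ^ 2 := by nlinarith [norm_nonneg u]
  have key := Real.geom_mean_le_arith_mean Finset.univ c (fun i => u i ^ 2 / c i)
    (fun i _ => (hc i).le) (by simpa using hCpos) (fun i _ => div_nonneg (sq_nonneg _) (hc i).le)
  have hsum : ∑ i, c i * (u i ^ 2 / c i) = ∑ i, u i ^ 2 :=
    Finset.sum_congr rfl fun i _ => by rw [mul_div_assoc', mul_div_cancel_left₀ _ (hc i).ne']
  rw [hsum] at key
  have hprod_nonneg : 0 ≤ ∏ i, (u i ^ 2 / c i) ^ (c i) :=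
    Finset.prod_nonneg fun i _ => Real.rpow_nonneg (div_nonneg (sq_nonneg _) (hc i).le) _
  have key2 : ∏ i, (u i ^ 2 / c i) ^ (c i) ≤ (M ^ 2 / C) ^ C := by
    have h1 : (∏ i, (u i ^ 2 / c i) ^ (c i)) ^ (C⁻¹) ≤ M ^ 2 / C :=
      le_trans key (by gcongr)
    have := Real.rpow_le_rpow (Real.rpow_nonneg hprod_nonneg _) h1 hCpos.le
    rwa [← Real.rpow_natCast, ← Real.rpow_mul hprod_nonneg, Real.rpow_natCast,
      inv_mul_cancel₀ hCpos.ne', Real.rpow_one] at this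
  -- rewrite the LHS product
  have hsplit : ∏ i, (u i ^ 2) ^ (c i) = (∏ i, (u i ^ 2 / c i) ^ (c i)) * ∏ i, (c i) ^ (c i) := by
    rw [← Finset.prod_mul_distrib]
    refine Finset.prod_congr rfl fun i _ => ?_
    rw [Real.div_rpow (by positivity) (hc i).le, div_mul_cancel₀]
    exact (Real.rpow_pos_of_pos (hc i) _).ne'
  rw [hsplit]
  have hrhs : (M ^ 2 / C) ^ C = M ^ (2 * C) * C ^ (-C) := by
    rw [Real.div_rpow (by positivity) hCpos.le, Real.rpow_neg hCpos.le, div_eq_mul_inv,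
      ← Real.rpow_natCast M 2, ← Real.rpow_mul hM]
    norm_num
  have hcpow : 0 ≤ ∏ i, (c i) ^ (c i) :=
    Finset.prod_nonneg fun i _ => Real.rpow_nonneg (hc i).le _
  calc (∏ i, (u i ^ 2 / c i) ^ (c i)) * ∏ i, (c i) ^ (c i)
      ≤ (M ^ 2 / C) ^ C * ∏ i, (c i) ^ (c i) := by gcongr
    _ = M ^ (2 * C) * C ^ (-C) * ∏ i, (c i) ^ (c i) := by rw [hrhs]
end

section
/- For any positive integer n, (n + 1/2)·log n − n + (1/2)·log(2π) + 1/(12n+1) ≤ log(n!) ≤ (n + 1/2)·log n − n + (1/2)·log(2π) + 1/(12n). -/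
open scoped Topology
open Finset Filter Nat Real Stirling

/-- Sharp upper bound on successive log-Stirling differences. -/
lemma diff_le_robbins (m : ℕ) :
    Real.log (stirlingSeq (m + 1)) - Real.log (stirlingSeq (m + 2)) ≤
      1 / (12 * ((m : ℝ) + 1) * ((m : ℝ) + 2)) := by
  have htval : ((1 : ℝ) / (2 * ((m : ℕ) + 1 : ℕ) + 1)) ^ 2 = 1 / (2 * (m : ℝ) + 3) ^ 2 := by
    push_cast; rw [div_pow]; ring_nf
  set t : ℝ := ((1 : ℝ) / (2 * ((m : ℕ) + 1 : ℕ) + 1)) ^ 2 with ht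
  have ht0 : 0 < t := by rw [htval]; positivity
  have ht1 : t < 1 := by
    rw [htval, div_lt_one (by positivity)]
    nlinarith [Nat.cast_nonneg (α := ℝ) m]
  have hgeo : HasSum (fun k : ℕ => (1:ℝ)/3 * t ^ (k + 1)) (1/3 * (t / (1 - t))) := by
    have h := (hasSum_geometric_of_lt_one ht0.le ht1).mul_left (t/3)
    have : (fun k : ℕ => t/3 * t ^ k) = fun k : ℕ => (1:ℝ)/3 * t ^ (k + 1) := by
      funext k; rw [pow_succ]; ring
    rw [this] at h
    rw [show (1:ℝ)/3 * (t / (1 - t)) = t/3 * (1-t)⁻¹ by rw [div_eq_mul_inv t (1-t)]; ring]; exact h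
  have hle : Real.log (stirlingSeq (m + 1)) - Real.log (stirlingSeq (m + 2)) ≤
      1/3 * (t / (1 - t)) := by
    refine hasSum_le (fun k => ?_) (log_stirlingSeq_diff_hasSum m) hgeo
    have h1 : (1 : ℝ) / (2 * ((k : ℕ) + 1 : ℕ) + 1) ≤ 1/3 := by
      rw [div_le_div_iff₀ (by positivity) (by norm_num)]
      push_cast; linarith [Nat.cast_nonneg (α := ℝ) k]
    have h2 : (0:ℝ) ≤ t ^ (k + 1) := pow_nonneg ht0.le _
    exact mul_le_mul_of_nonneg_right h1 h2
  refine hle.trans (le_of_eq ?_)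
  rw [htval]
  have hm : (0:ℝ) ≤ (m:ℝ) := Nat.cast_nonneg m
  have h3 : (1:ℝ) - 1 / (2 * (m:ℝ) + 3) ^ 2 ≠ 0 := by
    rw [sub_ne_zero]
    intro h
    rw [eq_comm, div_eq_one_iff_eq (by positivity)] at h
    nlinarith
  have h4 : (0:ℝ) < 24 + (m:ℝ)*36 + (m:ℝ)^2*12 := by positivity
  field_simp
  rw [div_eq_iff (by nlinarith : (0:ℝ) < (2 * (m:ℝ) + 3) ^ 2 - 1).ne']; ring

/-- Lower bound: first term of the series. -/
lemma diff_ge_robbins (m : ℕ) :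
    1 / (3 * (2 * (m : ℝ) + 3) ^ 2) ≤
      Real.log (stirlingSeq (m + 1)) - Real.log (stirlingSeq (m + 2)) := by
  have h := le_hasSum (log_stirlingSeq_diff_hasSum m) 0 (fun j _ => by positivity)
  refine le_trans (le_of_eq ?_) h
  push_cast
  rw [pow_one, div_pow]
  field_simp
  ring

/-- `log (stirlingSeq (k+1))` tends to `log √π`. -/
lemma tendsto_log_stirling :
    Tendsto (fun k : ℕ => Real.log (stirlingSeq (k + 1))) atTop (𝓝 (Real.log (Real.sqrt π))) := by
  have h : Tendsto (fun k : ℕ => stirlingSeq (k + 1)) atTop (𝓝 (Real.sqrt π)) :=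
    tendsto_stirlingSeq_sqrt_pi.comp (tendsto_add_atTop_nat 1)
  exact h.log (Real.sqrt_pos.mpr Real.pi_pos).ne'

lemma robbins_upper (m : ℕ) :
    Real.log (stirlingSeq (m + 1)) ≤ Real.log (Real.sqrt π) + 1 / (12 * ((m : ℝ) + 1)) := by
  set f : ℕ → ℝ := fun k => Real.log (stirlingSeq (k + 1)) - 1 / (12 * ((k : ℝ) + 1)) with hf
  have hmono : Monotone f := by
    apply monotone_nat_of_le_succ
    intro k
    have h := diff_le_robbins k
    have hk : (0:ℝ) ≤ (k:ℝ) := Nat.cast_nonneg k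
    have e1 : (1:ℝ) / (12 * ((k : ℝ) + 1)) - 1 / (12 * ((k : ℝ) + 1 + 1)) =
        1 / (12 * ((k : ℝ) + 1) * ((k : ℝ) + 2)) := by
      field_simp
      ring
    simp only [hf]
    push_cast
    linarith
  have hlim : Tendsto f atTop (𝓝 (Real.log (Real.sqrt π))) := by
    have h2 : Tendsto (fun k : ℕ => 1 / (12 * ((k : ℝ) + 1))) atTop (𝓝 0) := by
      have := tendsto_one_div_add_atTop_nhds_zero_nat (𝕜 := ℝ)
      have h3 : Tendsto (fun k : ℕ => (12 * ((k : ℝ) + 1))) atTop atTop := by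
        apply Tendsto.const_mul_atTop (by norm_num : (0:ℝ) < 12)
        exact tendsto_natCast_atTop_atTop.atTop_add tendsto_const_nhds
      simp only [one_div]
      exact h3.inv_tendsto_atTop
    have h4 := tendsto_log_stirling.sub h2
    rw [sub_zero] at h4
    exact h4
  have := hmono.ge_of_tendsto hlim m
  simp only [hf] at this
  linarith

lemma robbins_lower (m : ℕ) :
    Real.log (Real.sqrt π) + 1 / (12 * ((m : ℝ) + 1) + 1) ≤ Real.log (stirlingSeq (m + 1)) := by
  set f : ℕ → ℝ := fun k => Real.log (stirlingSeq (k + 1)) - 1 / (12 * ((k : ℝ) + 1) + 1) with hf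
  have hanti : Antitone f := by
    apply antitone_nat_of_succ_le
    intro k
    have h := diff_ge_robbins k
    have hk : (0:ℝ) ≤ (k:ℝ) := Nat.cast_nonneg k
    have e1 : (1:ℝ) / (12 * ((k : ℝ) + 1) + 1) - 1 / (12 * ((k : ℝ) + 1 + 1) + 1) ≤
        1 / (3 * (2 * (k : ℝ) + 3) ^ 2) := by
      rw [div_sub_div _ _ (by positivity) (by positivity), div_le_div_iff₀ (by positivity) (by positivity)]
      nlinarith
    simp only [hf]
    push_cast
    linarith
  have hlim : Tendsto f atTop (𝓝 (Real.log (Real.sqrt π))) := by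
    have h3 : Tendsto (fun k : ℕ => (12 * ((k : ℝ) + 1) + 1)) atTop atTop := by
      apply Tendsto.atTop_add _ tendsto_const_nhds
      apply Tendsto.const_mul_atTop (by norm_num : (0:ℝ) < 12)
      exact tendsto_natCast_atTop_atTop.atTop_add tendsto_const_nhds
    have h2 : Tendsto (fun k : ℕ => 1 / (12 * ((k : ℝ) + 1) + 1)) atTop (𝓝 0) := by
      simp only [one_div]
      exact h3.inv_tendsto_atTop
    have h4 := tendsto_log_stirling.sub h2
    rw [sub_zero] at h4
    exact h4
  have := hanti.le_of_tendsto hlim m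
  simp only [hf] at this
  linarith

theorem stmt_2 (n : ℕ) (hn : 0 < n) :
    ((n : ℝ) + 1/2) * Real.log n - n + (1/2) * Real.log (2 * Real.pi) + 1/(12*n+1)
      ≤ Real.log (Nat.factorial n) ∧
    Real.log (Nat.factorial n) ≤
      ((n : ℝ) + 1/2) * Real.log n - n + (1/2) * Real.log (2 * Real.pi) + 1/(12*n) := by
  obtain ⟨m, rfl⟩ := Nat.exists_eq_add_of_lt hn
  rw [zero_add] at *
  have hn' : (0:ℝ) < (m:ℝ) + 1 := by positivity
  have hfact : Real.log ((m + 1)! : ℕ) = Real.log (stirlingSeq (m + 1)) +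
      (1/2) * Real.log 2 + (((m:ℝ) + 1) + 1/2) * Real.log ((m:ℝ) + 1) - ((m:ℝ) + 1) := by
    have h := log_stirlingSeq_formula (m + 1)
    have h2 : Real.log (2 * (↑(m + 1) : ℝ)) = Real.log 2 + Real.log ((m:ℝ) + 1) := by
      push_cast
      rw [Real.log_mul (by norm_num) (by positivity)]
    have h3 : Real.log ((↑(m + 1) : ℝ) / Real.exp 1) = Real.log ((m:ℝ) + 1) - 1 := by
      push_cast
      rw [Real.log_div (by positivity) (Real.exp_ne_zero 1), Real.log_exp]
    rw [h2, h3] at h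
    push_cast at h ⊢
    linarith
  have hsplit : Real.log (2 * π) = Real.log 2 + Real.log π := by
    rw [Real.log_mul (by norm_num) Real.pi_ne_zero]
  have hsqrt : Real.log (Real.sqrt π) = (1/2) * Real.log π := by
    rw [Real.log_sqrt Real.pi_pos.le]; ring
  have hup := robbins_upper m
  have hlo := robbins_lower m
  rw [hsqrt] at hup hlo
  constructor
  · rw [hfact, hsplit]
    push_cast
    nlinarith
  · rw [hfact, hsplit]
    push_cast
    nlinarith
end

section
/- If Λ is a probability density on R^d with ∫ Λ(ω) ‖ω‖^R dω < ∞, k(u) = ∫ Λ(ω) exp(i ω·u) dω, and a quadrature rule with nonnegative weights a_i and points ω_i is exact for all polynomials of total degree ≤ R (R even), then for every u ∈ R^d, |k(u) − Σ_i a_i exp(i ω_i·u)| ≤ (2 ‖u‖^R / R!) ∫ Λ(ω) ‖ω‖^R dω. -/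
open MeasureTheory
open scoped InnerProductSpace BigOperators
open Complex Finset

lemma hd_aux (n : ℕ) (t : ℝ) :
    HasDerivAt (fun s : ℝ => Complex.exp (s * I) - ∑ k ∈ range (n+1), ((s:ℂ) * I)^k / k.factorial)
      (I * (Complex.exp (t * I) - ∑ k ∈ range n, ((t:ℂ) * I)^k / k.factorial)) t := by
  have h1 : HasDerivAt (fun s : ℝ => Complex.exp (s * I)) (Complex.exp (t * I) * I) t := by
    have : HasDerivAt (fun w : ℂ => Complex.exp (w * I)) (Complex.exp ((t:ℂ) * I) * (1 * I)) (t:ℂ) :=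
      ((hasDerivAt_id (t:ℂ)).mul_const I).cexp
    simpa using this.comp_ofReal
  have h2 : ∀ k : ℕ, HasDerivAt (fun s : ℝ => ((s:ℂ) * I)^k / k.factorial)
      ((k : ℂ) * ((t:ℂ) * I)^(k-1) * I / k.factorial) t := by
    intro k
    have : HasDerivAt (fun w : ℂ => (w * I)^k / k.factorial)
        ((k : ℂ) * ((t:ℂ) * I)^(k-1) * (1 * I) / k.factorial) (t:ℂ) :=
      (((hasDerivAt_id (t:ℂ)).mul_const I).pow k).div_const _
    simpa using this.comp_ofReal
  have h3 : HasDerivAt (fun s : ℝ => ∑ k ∈ range (n+1), ((s:ℂ) * I)^k / k.factorial)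
      (∑ k ∈ range (n+1), (k : ℂ) * ((t:ℂ) * I)^(k-1) * I / k.factorial) t :=
    by have h := HasDerivAt.sum (u := range (n+1)) (fun k _ => h2 k); rw [Finset.sum_fn] at h; exact h
  have key : ∑ k ∈ range (n+1), (k : ℂ) * ((t:ℂ) * I)^(k-1) * I / k.factorial
      = I * ∑ k ∈ range n, ((t:ℂ) * I)^k / k.factorial := by
    rw [Finset.sum_range_succ', Finset.mul_sum]
    simp only [Nat.cast_zero, zero_mul, zero_div, add_zero]
    refine Finset.sum_congr rfl fun k _ => ?_
    have hfac : ((Nat.factorial (k+1) : ℕ) : ℂ) = ((k:ℂ)+1) * (Nat.factorial k : ℂ) := by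
      rw [Nat.factorial_succ]; push_cast; ring
    have hk : (Nat.factorial k : ℂ) ≠ 0 := Nat.cast_ne_zero.2 (Nat.factorial_ne_zero k)
    have hk1 : ((k:ℂ)+1) ≠ 0 := by
      have : ((k:ℂ)+1) = ((k+1 : ℕ) : ℂ) := by push_cast; ring
      rw [this]; exact Nat.cast_ne_zero.2 (Nat.succ_ne_zero k)
    rw [hfac]
    push_cast
    field_simp
  have := h1.fun_sub h3
  rw [key] at this
  convert this using 1
  · rfl
  · ring

lemma taylor_nonneg (n : ℕ) : ∀ z : ℝ, 0 ≤ z →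
    ‖Complex.exp (z * I) - ∑ k ∈ range n, ((z:ℂ) * I)^k / k.factorial‖
      ≤ z ^ n / n.factorial := by
  induction n with
  | zero =>
    intro z _
    simp [Complex.norm_exp]
  | succ n ih =>
    intro z hz
    set F : ℝ → ℂ := fun s => Complex.exp (s * I) - ∑ k ∈ range (n+1), ((s:ℂ) * I)^k / k.factorial with hF
    set G : ℝ → ℂ := fun t => I * (Complex.exp (t * I) - ∑ k ∈ range n, ((t:ℂ) * I)^k / k.factorial) with hG
    have hderiv : ∀ t ∈ Set.uIcc 0 z, HasDerivAt F (G t) t := fun t _ => hd_aux n t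
    have hGcont : Continuous G := by
      apply continuous_const.mul
      apply Continuous.sub
      · exact Complex.continuous_exp.comp (by continuity)
      · apply continuous_finset_sum
        intro k _
        exact Continuous.div_const (by continuity) _
    have hint : IntervalIntegrable G MeasureTheory.volume 0 z := hGcont.intervalIntegrable _ _
    have hFTC : (∫ t in (0:ℝ)..z, G t) = F z - F 0 :=
      intervalIntegral.integral_eq_sub_of_hasDerivAt hderiv hint
    have hF0 : F 0 = 0 := by
      simp [hF, Finset.sum_range_succ']
    have hFz : F z = ∫ t in (0:ℝ)..z, G t := by rw [hFTC, hF0, sub_zero]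
    show ‖F z‖ ≤ _
    rw [hFz]
    calc ‖∫ t in (0:ℝ)..z, G t‖ ≤ ∫ t in (0:ℝ)..z, ‖G t‖ :=
          intervalIntegral.norm_integral_le_integral_norm hz
      _ ≤ ∫ t in (0:ℝ)..z, t ^ n / n.factorial := by
          apply intervalIntegral.integral_mono_on hz
          · exact hGcont.norm.intervalIntegrable _ _
          · exact Continuous.intervalIntegrable ((continuous_pow n).div_const _) _ _
          · intro t ht
            have ht0 : 0 ≤ t := ht.1
            have := ih t ht0
            simpa [hG, norm_mul] using this
      _ = z ^ (n+1) / (n+1).factorial := by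
          rw [intervalIntegral.integral_div, integral_pow, Nat.factorial_succ]
          have h1 : ((n:ℝ)+1) ≠ 0 := by positivity
          have h2 : (Nat.factorial n : ℝ) ≠ 0 := Nat.cast_ne_zero.2 (Nat.factorial_ne_zero n)
          push_cast
          field_simp
          simp

lemma taylor_bound (n : ℕ) (z : ℝ) :
    ‖Complex.exp (z * I) - ∑ k ∈ range n, ((z:ℂ) * I)^k / k.factorial‖
      ≤ |z| ^ n / n.factorial := by
  rcases le_or_gt 0 z with hz | hz
  · rw [_root_.abs_of_nonneg hz]; exact taylor_nonneg n z hz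
  · have hz' : 0 ≤ -z := by linarith
    have h := taylor_nonneg n (-z) hz'
    have hconj : Complex.exp ((z:ℝ) * I) - ∑ k ∈ range n, ((z:ℂ) * I)^k / k.factorial
        = (starRingEnd ℂ) (Complex.exp (((-z : ℝ):ℂ) * I) - ∑ k ∈ range n, (((-z:ℝ):ℂ) * I)^k / k.factorial) := by
      rw [map_sub, map_sum, ← Complex.exp_conj]
      congr 1
      · congr 1
        simp [map_mul, Complex.conj_I]
      · refine Finset.sum_congr rfl fun k _ => ?_
        rw [map_div₀, map_pow, map_mul]
        simp [Complex.conj_I]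
    rw [hconj, RCLike.norm_conj]
    rw [_root_.abs_of_neg hz]
    exact h

lemma eval_polyPow {d : ℕ} (u : EuclideanSpace ℝ (Fin d)) (k : ℕ) (x : Fin d → ℝ) :
    MvPolynomial.eval x ((∑ j, MvPolynomial.C (u j) * MvPolynomial.X j : MvPolynomial (Fin d) ℝ)^k)
      = (∑ j, x j * u j) ^ k := by
  rw [map_pow]
  congr 1
  rw [map_sum]
  exact Finset.sum_congr rfl fun j _ => by simp [mul_comm]

lemma deg_polyPow {d : ℕ} (u : EuclideanSpace ℝ (Fin d)) (k : ℕ) :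
    ((∑ j, MvPolynomial.C (u j) * MvPolynomial.X j : MvPolynomial (Fin d) ℝ)^k).totalDegree ≤ k := by
  calc ((∑ j, MvPolynomial.C (u j) * MvPolynomial.X j : MvPolynomial (Fin d) ℝ)^k).totalDegree
      ≤ k * (∑ j, MvPolynomial.C (u j) * MvPolynomial.X j : MvPolynomial (Fin d) ℝ).totalDegree :=
        MvPolynomial.totalDegree_pow _ _
    _ ≤ k * 1 := by
        apply Nat.mul_le_mul_left
        apply le_trans (MvPolynomial.totalDegree_finset_sum _ _)
        apply Finset.sup_le
        intro j _
        calc (MvPolynomial.C (u j) * MvPolynomial.X j : MvPolynomial (Fin d) ℝ).totalDegree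
            ≤ (MvPolynomial.C (u j) : MvPolynomial (Fin d) ℝ).totalDegree
              + (MvPolynomial.X j : MvPolynomial (Fin d) ℝ).totalDegree :=
              MvPolynomial.totalDegree_mul _ _
          _ ≤ 1 := by simp [MvPolynomial.totalDegree_X]
    _ = k := Nat.mul_one k

lemma inner_eq_sum {d : ℕ} (x u : EuclideanSpace ℝ (Fin d)) :
    ⟪x, u⟫_ℝ = ∑ j, x j * u j := by
  simp [PiLp.inner_apply, RCLike.inner_apply, conj_trivial]
  exact Finset.sum_congr rfl fun j _ => mul_comm _ _


theorem stmt_17 (d D : ℕ) (Λ : EuclideanSpace ℝ (Fin d) → ℝ)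
    (hΛnonneg : ∀ ω, 0 ≤ Λ ω)
    (hΛprob : ∫ ω, Λ ω = 1)
    (R : ℕ) (hReven : Even R) (hRpos : 0 < R)
    (hmoment : Integrable (fun ω : EuclideanSpace ℝ (Fin d) => Λ ω * ‖ω‖ ^ R))
    (a : Fin D → ℝ) (ha : ∀ i, 0 ≤ a i) (w : Fin D → EuclideanSpace ℝ (Fin d))
    (hexact : ∀ p : MvPolynomial (Fin d) ℝ, p.totalDegree ≤ R →
      ∫ ω, Λ ω * MvPolynomial.eval (fun i => ω i) p
        = ∑ i, a i * MvPolynomial.eval (fun j => w i j) p)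
    (u : EuclideanSpace ℝ (Fin d)) :
    ‖(∫ ω, (Λ ω : ℂ) * Complex.exp ((⟪ω, u⟫_ℝ : ℂ) * Complex.I))
        - ∑ i, (a i : ℂ) * Complex.exp ((⟪w i, u⟫_ℝ : ℂ) * Complex.I)‖
      ≤ 2 * ‖u‖ ^ R / (Nat.factorial R) * ∫ ω, Λ ω * ‖ω‖ ^ R := by
  have hΛint : Integrable Λ := by
    by_contra h
    rw [integral_undef h] at hΛprob
    exact one_ne_zero hΛprob.symm
  have hcont_ip : Continuous (fun ω : EuclideanSpace ℝ (Fin d) => ⟪ω, u⟫_ℝ) :=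
    continuous_id.inner continuous_const
  have hip_le : ∀ ω : EuclideanSpace ℝ (Fin d), |⟪ω, u⟫_ℝ| ≤ ‖ω‖ * ‖u‖ :=
    fun ω => abs_real_inner_le_norm ω u
  -- integrability of moment-type functions
  have hintk : ∀ k, k ≤ R → Integrable (fun ω : EuclideanSpace ℝ (Fin d) => Λ ω * ⟪ω, u⟫_ℝ ^ k) := by
    intro k hk
    have hms : AEStronglyMeasurable (fun ω : EuclideanSpace ℝ (Fin d) => Λ ω * ⟪ω, u⟫_ℝ ^ k) volume :=
      hΛint.aestronglyMeasurable.mul (hcont_ip.pow k).aestronglyMeasurable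
    refine Integrable.mono'
      (g := fun ω : EuclideanSpace ℝ (Fin d) => (1 + ‖u‖) ^ R * (Λ ω + Λ ω * ‖ω‖ ^ R))
      ((hΛint.add hmoment).const_mul _) hms ?_
    filter_upwards with ω
    have h1 : ‖Λ ω * ⟪ω, u⟫_ℝ ^ k‖ = Λ ω * |⟪ω, u⟫_ℝ| ^ k := by
      rw [norm_mul, Real.norm_eq_abs, Real.norm_eq_abs, _root_.abs_of_nonneg (hΛnonneg ω), _root_.abs_pow]
    rw [h1]
    have h2 : |⟪ω, u⟫_ℝ| ^ k ≤ (‖ω‖ * ‖u‖) ^ k :=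
      pow_le_pow_left₀ (abs_nonneg _) (hip_le ω) k
    have h3 : (‖ω‖ * ‖u‖) ^ k ≤ (1 + ‖u‖) ^ R * (1 + ‖ω‖ ^ R) := by
      rw [mul_pow]
      have hb : ‖u‖ ^ k ≤ (1 + ‖u‖) ^ R := by
        calc ‖u‖ ^ k ≤ (1 + ‖u‖) ^ k :=
              pow_le_pow_left₀ (norm_nonneg u) (by linarith [norm_nonneg u]) k
          _ ≤ (1 + ‖u‖) ^ R := pow_le_pow_right₀ (by linarith [norm_nonneg u]) hk
      have hω : ‖ω‖ ^ k ≤ 1 + ‖ω‖ ^ R := by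
        rcases le_or_gt ‖ω‖ 1 with h | h
        · have h1 : ‖ω‖ ^ k ≤ 1 := pow_le_one₀ (norm_nonneg ω) h
          nlinarith [pow_nonneg (norm_nonneg ω) R]
        · have : ‖ω‖ ^ k ≤ ‖ω‖ ^ R := pow_le_pow_right₀ h.le hk
          linarith
      calc ‖ω‖ ^ k * ‖u‖ ^ k ≤ (1 + ‖ω‖ ^ R) * (1 + ‖u‖) ^ R := by
            apply mul_le_mul hω hb (pow_nonneg (norm_nonneg u) k)
            positivity
        _ = (1 + ‖u‖) ^ R * (1 + ‖ω‖ ^ R) := by ring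
    calc Λ ω * |⟪ω, u⟫_ℝ| ^ k ≤ Λ ω * ((1 + ‖u‖) ^ R * (1 + ‖ω‖ ^ R)) :=
          mul_le_mul_of_nonneg_left (h2.trans h3) (hΛnonneg ω)
      _ = (1 + ‖u‖) ^ R * (Λ ω + Λ ω * ‖ω‖ ^ R) := by ring
  -- quadrature exactness for inner-product powers
  have hquad : ∀ k, k ≤ R →
      ∫ ω, Λ ω * ⟪ω, u⟫_ℝ ^ k = ∑ i, a i * ⟪w i, u⟫_ℝ ^ k := by
    intro k hk
    have := hexact ((∑ j, MvPolynomial.C (u j) * MvPolynomial.X j)^k)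
      ((deg_polyPow u k).trans hk)
    simpa only [eval_polyPow, ← inner_eq_sum] using this
  -- Taylor polynomial T
  set T : ℝ → ℂ := fun z => ∑ k ∈ range R, ((z:ℂ) * Complex.I)^k / (Nat.factorial k) with hT
  have hterm : ∀ k : ℕ, (fun ω : EuclideanSpace ℝ (Fin d) =>
      (Λ ω : ℂ) * ((⟪ω, u⟫_ℝ : ℂ) * Complex.I)^k / (Nat.factorial k))
      = fun ω => ((Λ ω * ⟪ω, u⟫_ℝ ^ k : ℝ) : ℂ) * (Complex.I ^ k / (Nat.factorial k : ℂ)) := by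
    intro k
    funext ω
    push_cast
    ring
  have hTsplit : (fun ω : EuclideanSpace ℝ (Fin d) => (Λ ω : ℂ) * T ⟪ω, u⟫_ℝ)
      = fun ω => ∑ k ∈ range R, ((Λ ω * ⟪ω, u⟫_ℝ ^ k : ℝ) : ℂ) * (Complex.I ^ k / (Nat.factorial k : ℂ)) := by
    funext ω
    rw [hT, Finset.mul_sum]
    refine Finset.sum_congr rfl fun k _ => ?_
    have := congrFun (hterm k) ω
    simpa [mul_div_assoc] using this
  have hTint : Integrable (fun ω : EuclideanSpace ℝ (Fin d) => (Λ ω : ℂ) * T ⟪ω, u⟫_ℝ) := by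
    rw [hTsplit]
    exact integrable_finset_sum _ fun k hk =>
      ((hintk k (Finset.mem_range.1 hk).le).ofReal).mul_const _
  have hTval : ∫ ω, (Λ ω : ℂ) * T ⟪ω, u⟫_ℝ = ∑ i, (a i : ℂ) * T ⟪w i, u⟫_ℝ := by
    have hswap := integral_finset_sum (μ := volume) (range R)
      (f := fun k (ω : EuclideanSpace ℝ (Fin d)) =>
        ((Λ ω * ⟪ω, u⟫_ℝ ^ k : ℝ) : ℂ) * (Complex.I ^ k / (Nat.factorial k : ℂ)))
      (fun k hk => ((hintk k (Finset.mem_range.1 hk).le).ofReal).mul_const _)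
    rw [hTsplit, hswap]
    have step : ∀ k ∈ range R,
        (∫ ω, ((Λ ω * ⟪ω, u⟫_ℝ ^ k : ℝ) : ℂ) * (Complex.I ^ k / (Nat.factorial k : ℂ)))
          = ∑ i, ((a i * ⟪w i, u⟫_ℝ ^ k : ℝ) : ℂ) * (Complex.I ^ k / (Nat.factorial k : ℂ)) := by
      intro k hk
      have hor : ∫ ω, ((Λ ω * ⟪ω, u⟫_ℝ ^ k : ℝ) : ℂ)
          = ((∫ ω, Λ ω * ⟪ω, u⟫_ℝ ^ k : ℝ) : ℂ) := integral_ofReal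
      rw [integral_mul_const, hor, hquad k (Finset.mem_range.1 hk).le]
      push_cast
      rw [Finset.sum_mul]
    rw [Finset.sum_congr rfl step, Finset.sum_comm]
    refine Finset.sum_congr rfl fun i _ => ?_
    rw [hT, Finset.mul_sum]
    refine Finset.sum_congr rfl fun k _ => ?_
    push_cast
    ring
  have hexpint : Integrable (fun ω : EuclideanSpace ℝ (Fin d) =>
      (Λ ω : ℂ) * Complex.exp ((⟪ω, u⟫_ℝ : ℂ) * Complex.I)) := by
    refine Integrable.mono' hΛint ?_ ?_
    · exact (Complex.continuous_ofReal.comp_aestronglyMeasurable hΛint.aestronglyMeasurable).mul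
        (Complex.continuous_exp.comp ((Complex.continuous_ofReal.comp hcont_ip).mul
          continuous_const)).aestronglyMeasurable
    · filter_upwards with ω
      rw [norm_mul]
      have h1 : ‖Complex.exp ((⟪ω, u⟫_ℝ : ℂ) * Complex.I)‖ = 1 := by
        rw [Complex.norm_exp]; simp
      rw [h1]
      simp [_root_.abs_of_nonneg (hΛnonneg ω)]
  -- split into remainder terms
  have hsplit : (∫ ω, (Λ ω : ℂ) * Complex.exp ((⟪ω, u⟫_ℝ : ℂ) * Complex.I))
        - ∑ i, (a i : ℂ) * Complex.exp ((⟪w i, u⟫_ℝ : ℂ) * Complex.I)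
      = (∫ ω, (Λ ω : ℂ) * (Complex.exp ((⟪ω, u⟫_ℝ : ℂ) * Complex.I) - T ⟪ω, u⟫_ℝ))
        - ∑ i, (a i : ℂ) * (Complex.exp ((⟪w i, u⟫_ℝ : ℂ) * Complex.I) - T ⟪w i, u⟫_ℝ) := by
    have h1 : ∫ ω, (Λ ω : ℂ) * (Complex.exp ((⟪ω, u⟫_ℝ : ℂ) * Complex.I) - T ⟪ω, u⟫_ℝ)
        = (∫ ω, (Λ ω : ℂ) * Complex.exp ((⟪ω, u⟫_ℝ : ℂ) * Complex.I))
          - ∑ i, (a i : ℂ) * T ⟪w i, u⟫_ℝ := by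
      have heq : (fun ω : EuclideanSpace ℝ (Fin d) =>
          (Λ ω : ℂ) * (Complex.exp ((⟪ω, u⟫_ℝ : ℂ) * Complex.I) - T ⟪ω, u⟫_ℝ))
          = fun ω => (Λ ω : ℂ) * Complex.exp ((⟪ω, u⟫_ℝ : ℂ) * Complex.I)
            - (Λ ω : ℂ) * T ⟪ω, u⟫_ℝ := funext fun ω => mul_sub _ _ _
      rw [heq, integral_sub hexpint hTint, hTval]
    rw [h1]
    simp only [mul_sub, Finset.sum_sub_distrib]
    ring
  rw [hsplit]
  set M : ℝ := ∫ ω, Λ ω * ‖ω‖ ^ R with hM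
  -- bound the integral remainder
  have hb1 : ‖∫ ω, (Λ ω : ℂ) * (Complex.exp ((⟪ω, u⟫_ℝ : ℂ) * Complex.I) - T ⟪ω, u⟫_ℝ)‖
      ≤ (‖u‖ ^ R / Nat.factorial R) * M := by
    calc ‖∫ ω, (Λ ω : ℂ) * (Complex.exp ((⟪ω, u⟫_ℝ : ℂ) * Complex.I) - T ⟪ω, u⟫_ℝ)‖
        ≤ ∫ ω, ‖(Λ ω : ℂ) * (Complex.exp ((⟪ω, u⟫_ℝ : ℂ) * Complex.I) - T ⟪ω, u⟫_ℝ)‖ :=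
          norm_integral_le_integral_norm _
      _ ≤ ∫ ω, Λ ω * ‖ω‖ ^ R * (‖u‖ ^ R / Nat.factorial R) := by
          apply integral_mono_of_nonneg
          · filter_upwards with ω using norm_nonneg _
          · exact hmoment.mul_const _
          · filter_upwards with ω
            rw [norm_mul, Complex.norm_real, Real.norm_eq_abs,
              _root_.abs_of_nonneg (hΛnonneg ω)]
            have htay := taylor_bound R ⟪ω, u⟫_ℝ
            have hpow : |⟪ω, u⟫_ℝ| ^ R ≤ ‖ω‖ ^ R * ‖u‖ ^ R := by
              calc |⟪ω, u⟫_ℝ| ^ R ≤ (‖ω‖ * ‖u‖) ^ R :=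
                    pow_le_pow_left₀ (abs_nonneg _) (hip_le ω) R
                _ = ‖ω‖ ^ R * ‖u‖ ^ R := mul_pow _ _ _
            have hstep : ‖Complex.exp ((⟪ω, u⟫_ℝ : ℂ) * Complex.I) - T ⟪ω, u⟫_ℝ‖
                ≤ ‖ω‖ ^ R * ‖u‖ ^ R / Nat.factorial R := by
              refine htay.trans ?_
              gcongr
            calc Λ ω * ‖Complex.exp ((⟪ω, u⟫_ℝ : ℂ) * Complex.I) - T ⟪ω, u⟫_ℝ‖
                ≤ Λ ω * (‖ω‖ ^ R * ‖u‖ ^ R / Nat.factorial R) :=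
                  mul_le_mul_of_nonneg_left hstep (hΛnonneg ω)
              _ = Λ ω * ‖ω‖ ^ R * (‖u‖ ^ R / Nat.factorial R) := by ring
      _ = M * (‖u‖ ^ R / Nat.factorial R) := integral_mul_const _ _
      _ = (‖u‖ ^ R / Nat.factorial R) * M := mul_comm _ _
  -- bound the quadrature remainder
  have hb2 : ‖∑ i, (a i : ℂ) * (Complex.exp ((⟪w i, u⟫_ℝ : ℂ) * Complex.I) - T ⟪w i, u⟫_ℝ)‖
      ≤ (‖u‖ ^ R / Nat.factorial R) * M := by
    calc ‖∑ i, (a i : ℂ) * (Complex.exp ((⟪w i, u⟫_ℝ : ℂ) * Complex.I) - T ⟪w i, u⟫_ℝ)‖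
        ≤ ∑ i, ‖(a i : ℂ) * (Complex.exp ((⟪w i, u⟫_ℝ : ℂ) * Complex.I) - T ⟪w i, u⟫_ℝ)‖ :=
          norm_sum_le _ _
      _ ≤ ∑ i, a i * ⟪w i, u⟫_ℝ ^ R / Nat.factorial R := by
          apply Finset.sum_le_sum
          intro i _
          rw [norm_mul, Complex.norm_real, Real.norm_eq_abs, _root_.abs_of_nonneg (ha i)]
          have htay := taylor_bound R ⟪w i, u⟫_ℝ
          calc a i * ‖Complex.exp ((⟪w i, u⟫_ℝ : ℂ) * Complex.I) - T ⟪w i, u⟫_ℝ‖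
              ≤ a i * (|⟪w i, u⟫_ℝ| ^ R / Nat.factorial R) :=
                mul_le_mul_of_nonneg_left htay (ha i)
            _ = a i * ⟪w i, u⟫_ℝ ^ R / Nat.factorial R := by
                rw [Even.pow_abs hReven]; ring
      _ = (∑ i, a i * ⟪w i, u⟫_ℝ ^ R) / Nat.factorial R := by rw [Finset.sum_div]
      _ = (∫ ω, Λ ω * ⟪ω, u⟫_ℝ ^ R) / Nat.factorial R := by rw [hquad R le_rfl]
      _ ≤ (∫ ω, Λ ω * ‖ω‖ ^ R * ‖u‖ ^ R) / Nat.factorial R := by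
          have hmono : (∫ ω, Λ ω * ⟪ω, u⟫_ℝ ^ R) ≤ ∫ ω, Λ ω * ‖ω‖ ^ R * ‖u‖ ^ R := by
            apply integral_mono (hintk R le_rfl) (hmoment.mul_const _)
            intro ω
            have hpow : |⟪ω, u⟫_ℝ| ^ R ≤ ‖ω‖ ^ R * ‖u‖ ^ R := by
              calc |⟪ω, u⟫_ℝ| ^ R ≤ (‖ω‖ * ‖u‖) ^ R :=
                    pow_le_pow_left₀ (abs_nonneg _) (hip_le ω) R
                _ = ‖ω‖ ^ R * ‖u‖ ^ R := mul_pow _ _ _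
            have h1 : ⟪ω, u⟫_ℝ ^ R = |⟪ω, u⟫_ℝ| ^ R := (Even.pow_abs hReven _).symm
            calc Λ ω * ⟪ω, u⟫_ℝ ^ R = Λ ω * |⟪ω, u⟫_ℝ| ^ R := by rw [h1]
              _ ≤ Λ ω * (‖ω‖ ^ R * ‖u‖ ^ R) := mul_le_mul_of_nonneg_left hpow (hΛnonneg ω)
              _ = Λ ω * ‖ω‖ ^ R * ‖u‖ ^ R := by ring
          gcongr
      _ = (‖u‖ ^ R / Nat.factorial R) * M := by
          rw [integral_mul_const]
          ring
  calc ‖(∫ ω, (Λ ω : ℂ) * (Complex.exp ((⟪ω, u⟫_ℝ : ℂ) * Complex.I) - T ⟪ω, u⟫_ℝ))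
        - ∑ i, (a i : ℂ) * (Complex.exp ((⟪w i, u⟫_ℝ : ℂ) * Complex.I) - T ⟪w i, u⟫_ℝ)‖
      ≤ ‖∫ ω, (Λ ω : ℂ) * (Complex.exp ((⟪ω, u⟫_ℝ : ℂ) * Complex.I) - T ⟪ω, u⟫_ℝ)‖
        + ‖∑ i, (a i : ℂ) * (Complex.exp ((⟪w i, u⟫_ℝ : ℂ) * Complex.I) - T ⟪w i, u⟫_ℝ)‖ :=
        norm_sub_le _ _
    _ ≤ (‖u‖ ^ R / Nat.factorial R) * M + (‖u‖ ^ R / Nat.factorial R) * M := add_le_add hb1 hb2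
    _ = 2 * ‖u‖ ^ R / Nat.factorial R * M := by ring
end
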